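/- Let k ≥ 1 and n ≥ 2k. Then for every w ∈ 𝔖_n, the two-row irreducible character satisfies χ^{(n−k, k)}(w) = Σ_{μ ⊢ k} η^μ(w) − Σ_{μ ⊢ k−1} η^μ(w), where the sums are over all partitions of k and of k−1 respectively. -/

import Mathlib

open scoped Classical

/-- A finset `s ⊆ Fin n` is a cycle (orbit) of the permutation `w`;
fixed points count as cycles of length 1. -/
def IsCycleSetOf {n : ℕ} (w : Equiv.Perm (Fin n)) (s : Finset (Fin n)) : Prop :=
  ∃ x : Fin n, ∀ y : Fin n, y ∈ s ↔ w.SameCycle x y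

/-- The finset of cycles (orbits) of `w`, fixed points included as 1-cycles. -/
noncomputable def cyclesOf {n : ℕ} (w : Equiv.Perm (Fin n)) : Finset (Finset (Fin n)) :=
  Finset.univ.filter (IsCycleSetOf w)

/-- `cycCount w i` is `c_i(w)`, the number of cycles of `w` of length `i`. -/
noncomputable def cycCount {n : ℕ} (w : Equiv.Perm (Fin n)) (i : ℕ) : ℕ :=
  ((cyclesOf w).filter fun s => s.card = i).card

/-- The cycle type of `w` as a multiset, fixed points included as parts equal to 1. -/
noncomputable def fullCycleType {n : ℕ} (w : Equiv.Perm (Fin n)) : Multiset ℕ :=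
  (cyclesOf w).val.map Finset.card

/-- `zeta w lam` is `ζ^lam(w)`, the number of ordered brick tilings of the
composition/partition `lam` (given as a list of parts) by `w`:  tuples
`(S_1, …, S_r)` of pairwise disjoint sets of cycles of `w` such that the lengths of the
cycles in `S_j` sum to `lam_j`. -/
noncomputable def zeta {n : ℕ} (w : Equiv.Perm (Fin n)) (lam : List ℕ) : ℕ :=
  Nat.card {L : Fin lam.length → Finset (Finset (Fin n)) //
    (∀ i, ∀ c ∈ L i, c ∈ cyclesOf w) ∧
    (∀ i j, i ≠ j → Disjoint (L i) (L j)) ∧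
    ∀ i, (L i).sum Finset.card = lam.get i}

/-- `xi w mu` is `ξ^mu(w)`, the number of unordered brick tilings of `mu`
(a multiset of parts) by `w`: sets of pairwise disjoint nonempty sets of cycles of `w`
whose multiset of total lengths is `mu`. -/
noncomputable def xi {n : ℕ} (w : Equiv.Perm (Fin n)) (mu : Multiset ℕ) : ℕ :=
  Nat.card {T : Finset (Finset (Finset (Fin n))) //
    (∀ S ∈ T, ∀ c ∈ S, c ∈ cyclesOf w) ∧
    (∀ S ∈ T, S.Nonempty) ∧
    ((T : Set (Finset (Finset (Fin n)))).Pairwise Disjoint) ∧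
    T.val.map (fun S => S.sum Finset.card) = mu}

/-- `eta w mu` is `η^mu(w)`, the number of unordered crackless brick tilings of `mu`
by `w`: sets of distinct cycles of `w` whose multiset of lengths is `mu`. -/
noncomputable def eta {n : ℕ} (w : Equiv.Perm (Fin n)) (mu : Multiset ℕ) : ℕ :=
  Nat.card {T : Finset (Finset (Fin n)) //
    (∀ c ∈ T, c ∈ cyclesOf w) ∧ T.val.map Finset.card = mu}

/-- The irreducible character value `χ^lam(w)` defined via Frobenius's formula:
the coefficient of `x_1^{lam_1+ℓ-1} ⋯ x_ℓ^{lam_ℓ}` in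
`∏_{i<j}(x_i - x_j) · ∏_{cycles c of w} (x_1^{|c|} + ⋯ + x_ℓ^{|c|})`. -/
noncomputable def chiFrob {n : ℕ} (w : Equiv.Perm (Fin n)) (lam : List ℕ) : ℤ :=
  MvPolynomial.coeff
    (Finsupp.equivFunOnFinite.symm fun i : Fin lam.length =>
      lam.get i + (lam.length - 1 - (i : ℕ)))
    ((∏ p ∈ Finset.univ.filter (fun p : Fin lam.length × Fin lam.length => p.1 < p.2),
        (MvPolynomial.X p.1 - MvPolynomial.X p.2)) *
      ∏ c ∈ cyclesOf w, ∑ i : Fin lam.length,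
        (MvPolynomial.X i : MvPolynomial (Fin lam.length) ℤ) ^ c.card)

/-! For a two-row shape only two variables `x, y` occur, so `χ^{(n-k,k)}(w)` is the
coefficient of `x^{n-k+1} y^k` in `(x - y) ∏_c (x^{|c|} + y^{|c|})`. Expanding the product over
the sets `T` of cycles that contribute `y`, the coefficient of `x^{n-j} y^j` counts the sets of
cycles of total length `j`; grouping these sets by their multiset of lengths gives
`∑_{μ ⊢ j} η^μ(w)`. The factor `x - y` turns this into the difference of the counts for
`j = k` and `j = k - 1`. -/

open Finset MvPolynomial

theorem card_filter_powerset_sum_eq_sum_partition {α : Type*} (s : Finset α) (f : α → ℕ)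
    (hf : ∀ a ∈ s, 0 < f a) (j : ℕ) :
    #{t ∈ s.powerset | ∑ a ∈ t, f a = j} =
      ∑ μ : j.Partition, #{t ∈ s.powerset | t.val.map f = μ.parts} := by
  rw [card_eq_sum_card_fiberwise (f := fun t => t.val.map f)
      (t := univ.image Nat.Partition.parts), sum_image fun μ _ ν _ h => Nat.Partition.ext h]
  · refine sum_congr rfl fun μ _ => congr_arg card ?_
    rw [filter_filter]
    refine filter_congr fun t _ => ⟨And.right, fun h => ⟨?_, h⟩⟩
    rw [sum_eq_multiset_sum, h, μ.parts_sum]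
  · intro t ht
    rw [mem_coe, mem_filter, mem_powerset] at ht
    refine mem_image.2 ⟨⟨t.val.map f, ?_, ?_⟩, mem_univ _, rfl⟩
    · intro i hi
      obtain ⟨a, ha, rfl⟩ := Multiset.mem_map.1 hi
      exact hf a (ht.1 ha)
    · rw [← sum_eq_multiset_sum, ht.2]

section TwoVariables

variable {R : Type*}

theorem single_zero_add_single_one_inj {a b a' b' : ℕ} :
    Finsupp.single (0 : Fin 2) a + Finsupp.single 1 b =
      Finsupp.single 0 a' + Finsupp.single 1 b' ↔ a = a' ∧ b = b' := by
  refine ⟨fun h => ⟨?_, ?_⟩, by rintro ⟨rfl, rfl⟩; rfl⟩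
  · simpa using DFunLike.congr_fun h 0
  · simpa using DFunLike.congr_fun h 1

theorem coeff_prod_X_pow_add_X_pow [CommSemiring R] {α : Type*} [DecidableEq α]
    (s : Finset α) (f : α → ℕ) {a b : ℕ} (hab : a + b = ∑ x ∈ s, f x) :
    coeff (Finsupp.single 0 a + Finsupp.single 1 b)
        (∏ x ∈ s,
          ((X 0 : MvPolynomial (Fin 2) R) ^ f x + (X 1 : MvPolynomial (Fin 2) R) ^ f x)) =
      #{t ∈ s.powerset | ∑ x ∈ t, f x = b} := by
  have hmonomial : ∀ t ∈ s.powerset,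
      (∏ x ∈ t, (X 1 : MvPolynomial (Fin 2) R) ^ f x) * ∏ x ∈ s \ t, X 0 ^ f x =
        monomial
          (Finsupp.single 0 (∑ x ∈ s \ t, f x) + Finsupp.single 1 (∑ x ∈ t, f x)) 1 := by
    intro t _
    rw [prod_pow_eq_pow_sum, prod_pow_eq_pow_sum, X_pow_eq_monomial, X_pow_eq_monomial,
      monomial_mul, mul_one, add_comm]
  have hcoeff : ∀ t ∈ s.powerset,
      coeff (Finsupp.single (0 : Fin 2) a + Finsupp.single 1 b)
          (monomial (Finsupp.single 0 (∑ x ∈ s \ t, f x) + Finsupp.single 1 (∑ x ∈ t, f x))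
            (1 : R)) =
        if ∑ x ∈ t, f x = b then 1 else 0 := by
    intro t ht
    have hsplit := sum_sdiff (f := f) (mem_powerset.1 ht)
    rw [coeff_monomial]
    exact if_congr (single_zero_add_single_one_inj.trans (by omega)) rfl rfl
  rw [prod_congr rfl fun x _ => add_comm _ _, prod_add, sum_congr rfl hmonomial, coeff_sum,
    sum_congr rfl hcoeff, sum_boole]

theorem coeff_X_sub_X_mul [CommRing R] (p : MvPolynomial (Fin 2) R) (a b : ℕ) :
    coeff (Finsupp.single 0 (a + 1) + Finsupp.single 1 (b + 1)) ((X 0 - X 1) * p) =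
      coeff (Finsupp.single 0 a + Finsupp.single 1 (b + 1)) p -
        coeff (Finsupp.single 0 (a + 1) + Finsupp.single 1 b) p := by
  rw [sub_mul, coeff_sub]
  congr 1
  · rw [add_comm a, Finsupp.single_add, add_assoc, coeff_X_mul]
  · rw [add_comm b, Finsupp.single_add (1 : Fin 2), add_left_comm, coeff_X_mul]

end TwoVariables

section CyclesOf

variable {n : ℕ} (w : Equiv.Perm (Fin n))

theorem cyclesOf_eq_parts_ofSetoid :
    cyclesOf w = (Finpartition.ofSetoid (Equiv.Perm.SameCycle.setoid w)).parts := by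
  set P := Finpartition.ofSetoid (Equiv.Perm.SameCycle.setoid w)
  have hpart : ∀ x y, y ∈ P.part x ↔ w.SameCycle x y :=
    fun _ _ => Finpartition.mem_part_ofSetoid_iff_rel
  ext s
  simp only [cyclesOf, mem_filter, mem_univ, true_and, IsCycleSetOf]
  constructor
  · rintro ⟨x, hx⟩
    obtain rfl : s = P.part x := by ext y; rw [hx, hpart]
    exact P.part_mem.2 (mem_univ x)
  · intro hs
    obtain ⟨x, hx⟩ := P.nonempty_of_mem_parts hs
    exact ⟨x, fun y => by rw [← P.part_eq_of_mem hs hx, hpart]⟩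

theorem sum_card_cyclesOf : ∑ c ∈ cyclesOf w, c.card = n := by
  rw [cyclesOf_eq_parts_ofSetoid, Finpartition.sum_card_parts, card_univ, Fintype.card_fin]

theorem card_pos_of_mem_cyclesOf {c : Finset (Fin n)} (hc : c ∈ cyclesOf w) : 0 < c.card := by
  rw [cyclesOf_eq_parts_ofSetoid] at hc
  exact (Finpartition.nonempty_of_mem_parts _ hc).card_pos

theorem eta_eq_card_filter_powerset (μ : Multiset ℕ) :
    eta w μ = #{t ∈ (cyclesOf w).powerset | t.val.map Finset.card = μ} := by
  rw [eta, Nat.card_eq_fintype_card, Fintype.card_subtype]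
  congr 1
  ext t
  simp only [mem_filter, mem_univ, true_and, mem_powerset, subset_iff]

theorem coeff_prod_cyclesOf {R : Type*} [CommSemiring R] {a b : ℕ} (hab : a + b = n) :
    coeff (Finsupp.single 0 a + Finsupp.single 1 b)
        (∏ c ∈ cyclesOf w, ((X 0 : MvPolynomial (Fin 2) R) ^ c.card + X 1 ^ c.card)) =
      ∑ μ : b.Partition, (eta w μ.parts : R) := by
  rw [coeff_prod_X_pow_add_X_pow _ _ (hab.trans (sum_card_cyclesOf w).symm),
    card_filter_powerset_sum_eq_sum_partition _ _ (fun _ => card_pos_of_mem_cyclesOf w),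
    Nat.cast_sum]
  simp only [eta_eq_card_filter_powerset]

theorem chiFrob_two_rows (a b : ℕ) :
    chiFrob w [a, b] =
      coeff (Finsupp.single 0 (a + 1) + Finsupp.single 1 b)
        ((X 0 - X 1) *
          ∏ c ∈ cyclesOf w, ((X 0 : MvPolynomial (Fin 2) ℤ) ^ c.card + X 1 ^ c.card)) := by
  have hexponent :
      (Finsupp.equivFunOnFinite.symm fun i : Fin 2 => [a, b].get i + (1 - (i : ℕ))) =
        Finsupp.single 0 (a + 1) + Finsupp.single 1 b := by
    ext i
    fin_cases i <;> simp
  have hpairs : ({p : Fin 2 × Fin 2 | p.1 < p.2} : Finset (Fin 2 × Fin 2)) = {(0, 1)} := by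
    ext ⟨i, j⟩
    fin_cases i <;> fin_cases j <;> simp
  -- `chiFrob` unfolded, with `[a, b].length` evaluated to `2`
  show coeff (Finsupp.equivFunOnFinite.symm fun i : Fin 2 => [a, b].get i + (1 - (i : ℕ)))
    ((∏ p ∈ {p : Fin 2 × Fin 2 | p.1 < p.2}, (X p.1 - X p.2)) *
      ∏ c ∈ cyclesOf w, ∑ i : Fin 2, (X i : MvPolynomial (Fin 2) ℤ) ^ c.card) = _
  rw [hexponent, hpairs, prod_singleton]
  simp only [Fin.sum_univ_two]

end CyclesOf

theorem stmt13 (n k : ℕ) (hk : 1 ≤ k) (hnk : 2 * k ≤ n) (w : Equiv.Perm (Fin n)) :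
    chiFrob w [n - k, k] =
      (∑ μ : Nat.Partition k, (eta w μ.parts : ℤ)) -
        ∑ μ : Nat.Partition (k - 1), (eta w μ.parts : ℤ) := by
  obtain ⟨j, rfl⟩ : ∃ j, k = j + 1 := ⟨k - 1, by omega⟩
  rw [chiFrob_two_rows, coeff_X_sub_X_mul, coeff_prod_cyclesOf w (by omega),
    coeff_prod_cyclesOf w (by omega), Nat.add_sub_cancel]
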